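/- arXiv:1606.05505 — 2 statements merged into one kernel-verified Lean document; each statement's English description precedes it below -/
import Mathlib

section
/- For a tensor X of order d ≥ 2, the matricization rank r_t = rank(M_t(X)) satisfies r_t ≤ r_{t₁} · r_{t₂} whenever t is the disjoint union of t₁ and t₂. -/
/-- The matricization of a tensor `X : (Π i, J i) → ℝ` with row indices in the directions
satisfying `t` and column indices in the complementary directions. -/
def matricization {d : ℕ} {J : Fin d → Type*} (X : ((i : Fin d) → J i) → ℝ)
    (t : Fin d → Prop) [DecidablePred t] :
    Matrix ((i : {i : Fin d // t i}) → J i.1) ((i : {i : Fin d // ¬ t i}) → J i.1) ℝ :=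
  fun a b => X (fun i => if h : t i then a ⟨i, h⟩ else b ⟨i, h⟩)

/-- Hierarchical rank bound: if `t` is the disjoint union of `t₁` and `t₂`, then
`r_t ≤ r_{t₁} · r_{t₂}`. -/
theorem stmt11 {d : ℕ} (hd : 2 ≤ d) {J : Fin d → Type*} [∀ i, Fintype (J i)]
    (X : ((i : Fin d) → J i) → ℝ) (t₁ t₂ : Fin d → Prop)
    [DecidablePred t₁] [DecidablePred t₂]
    (hdisj : ∀ i, ¬ (t₁ i ∧ t₂ i)) :
    (matricization X (fun i => t₁ i ∨ t₂ i)).rank ≤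
      (matricization X t₁).rank * (matricization X t₂).rank := by
  classical
  set M : Matrix _ _ ℝ := matricization X (fun i => t₁ i ∨ t₂ i) with hM
  set M₁ : Matrix _ _ ℝ := matricization X t₁ with hM₁
  set M₂ : Matrix _ _ ℝ := matricization X t₂ with hM₂
  -- index types
  let Row := (i : {i : Fin d // t₁ i ∨ t₂ i}) → J i.1
  let Row₁ := (i : {i : Fin d // t₁ i}) → J i.1
  let Row₂ := (i : {i : Fin d // t₂ i}) → J i.1
  let Col := (i : {i : Fin d // ¬ (t₁ i ∨ t₂ i)}) → J i.1
  -- projections and merges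
  let π₁ : Row → Row₁ := fun a i => a ⟨i.1, Or.inl i.2⟩
  let π₂ : Row → Row₂ := fun a i => a ⟨i.1, Or.inr i.2⟩
  let merge : Row₁ → Row₂ → Row := fun a₁ a₂ i =>
    if h : t₁ i.1 then a₁ ⟨i.1, h⟩ else a₂ ⟨i.1, i.2.resolve_left h⟩
  let pack₁ : Row₂ → Col → ((i : {i : Fin d // ¬ t₁ i}) → J i.1) := fun a₂ b i =>
    if h : t₂ i.1 then a₂ ⟨i.1, h⟩ else b ⟨i.1, fun hor => hor.elim i.2 h⟩
  let pack₂ : Row₁ → Col → ((i : {i : Fin d // ¬ t₂ i}) → J i.1) := fun a₁ b i =>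
    if h : t₁ i.1 then a₁ ⟨i.1, h⟩ else b ⟨i.1, fun hor => hor.elim h i.2⟩
  have merge_proj : ∀ a : Row, merge (π₁ a) (π₂ a) = a := by
    intro a
    funext i
    simp only [merge, π₁, π₂]
    split <;> rfl
  have key₁ : ∀ (a₁ : Row₁) (a₂ : Row₂) (b : Col),
      M₁ a₁ (pack₁ a₂ b) = M (merge a₁ a₂) b := by
    intro a₁ a₂ b
    simp only [hM, hM₁, matricization]
    congr 1
    funext i
    by_cases h1 : t₁ i
    · rw [dif_pos h1, dif_pos (Or.inl h1)]
      simp only [merge, dif_pos h1]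
    · rw [dif_neg h1]
      by_cases h2 : t₂ i
      · rw [dif_pos (Or.inr h2)]
        simp only [pack₁, merge, dif_pos h2, dif_neg h1]
      · rw [dif_neg (fun hor => hor.elim h1 h2)]
        simp only [pack₁, dif_neg h2]
  have key₂ : ∀ (a₁ : Row₁) (a₂ : Row₂) (b : Col),
      M₂ a₂ (pack₂ a₁ b) = M (merge a₁ a₂) b := by
    intro a₁ a₂ b
    simp only [hM, hM₂, matricization]
    congr 1
    funext i
    by_cases h1 : t₁ i
    · rw [dif_neg (fun h2 => hdisj i ⟨h1, h2⟩), dif_pos (Or.inl h1)]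
      simp only [pack₂, merge, dif_pos h1]
    · by_cases h2 : t₂ i
      · rw [dif_pos h2, dif_pos (Or.inr h2)]
        simp only [merge, dif_neg h1]
      · rw [dif_neg h2, dif_neg (fun hor => hor.elim h1 h2)]
        simp only [pack₂, dif_neg h1]
  -- column spaces
  let R₁ : Submodule ℝ (Row₁ → ℝ) := LinearMap.range M₁.mulVecLin
  let R₂ : Submodule ℝ (Row₂ → ℝ) := LinearMap.range M₂.mulVecLin
  have hcol₁ : ∀ c, M₁.transpose c ∈ R₁ := by
    intro c
    show M₁.transpose c ∈ LinearMap.range M₁.mulVecLin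
    rw [Matrix.range_mulVecLin]
    exact Submodule.subset_span ⟨c, rfl⟩
  have hcol₂ : ∀ c, M₂.transpose c ∈ R₂ := by
    intro c
    show M₂.transpose c ∈ LinearMap.range M₂.mulVecLin
    rw [Matrix.range_mulVecLin]
    exact Submodule.subset_span ⟨c, rfl⟩
  have hrank₁ : M₁.rank = Module.finrank ℝ R₁ := rfl
  have hrank₂ : M₂.rank = Module.finrank ℝ R₂ := rfl
  -- bases of the column spaces
  let u : Module.Basis (Fin (Module.finrank ℝ R₁)) ℝ R₁ := Module.finBasis ℝ R₁
  let v : Module.Basis (Fin (Module.finrank ℝ R₂)) ℝ R₂ := Module.finBasis ℝ R₂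
  -- extend the coordinate functionals of `u` to the whole space
  choose Φ hΦ using fun k => LinearMap.exists_extend (u.coord k)
  -- the spanning family of the tensor product of column spaces
  let F : Fin (Module.finrank ℝ R₁) × Fin (Module.finrank ℝ R₂) → (Row → ℝ) :=
    fun kl a => (u kl.1 : Row₁ → ℝ) (π₁ a) * (v kl.2 : Row₂ → ℝ) (π₂ a)
  have hΦ' : ∀ k (w : R₁), Φ k (w : Row₁ → ℝ) = u.repr w k := by
    intro k w
    have := congrFun (congrArg (fun f => f.toFun) (hΦ k)) w
    simpa [Module.Basis.coord] using this
  -- main claim: every column of `M` lies in the span of `F`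
  have main : ∀ b : Col, M.transpose b ∈ Submodule.span ℝ (Set.range F) := by
    intro b
    -- the partial columns, as elements of R₁
    let g : Row₂ → R₁ := fun a₂ => ⟨M₁.transpose (pack₁ a₂ b), hcol₁ _⟩
    -- coefficient functions
    let c : Fin (Module.finrank ℝ R₁) → Row₂ → ℝ := fun k a₂ => Φ k (g a₂ : Row₁ → ℝ)
    -- each coefficient function lies in R₂
    have hcR₂ : ∀ k, c k ∈ R₂ := by
      intro k
      have hc : c k = ∑ a₁ : Row₁, Φ k (fun j => if a₁ = j then (1 : ℝ) else 0) •
          M₂.transpose (pack₂ a₁ b) := by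
        funext a₂
        have hw : (g a₂ : Row₁ → ℝ) =
            ∑ a₁ : Row₁, (g a₂ : Row₁ → ℝ) a₁ • fun j => if a₁ = j then (1 : ℝ) else 0 :=
          pi_eq_sum_univ _
        have : c k a₂ = Φ k (g a₂ : Row₁ → ℝ) := rfl
        rw [this, hw, map_sum]
        rw [Finset.sum_apply]
        refine Finset.sum_congr rfl fun a₁ _ => ?_
        rw [map_smul, smul_eq_mul, Pi.smul_apply, smul_eq_mul]
        have hga : (g a₂ : Row₁ → ℝ) a₁ = M₂.transpose (pack₂ a₁ b) a₂ := by
          show M₁ a₁ (pack₁ a₂ b) = M₂ a₂ (pack₂ a₁ b)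
          rw [key₁, key₂]
        rw [hga]; ring
      rw [hc]
      exact Submodule.sum_mem _ fun a₁ _ => Submodule.smul_mem _ _ (hcol₂ _)
    let C : Fin (Module.finrank ℝ R₁) → R₂ := fun k => ⟨c k, hcR₂ k⟩
    -- the column of M decomposes
    have hdecomp : M.transpose b = ∑ k, ∑ l, (v.repr (C k) l) • F (k, l) := by
      funext a
      have hcol : M.transpose b a = (g (π₂ a) : Row₁ → ℝ) (π₁ a) := by
        show M a b = M₁ (π₁ a) (pack₁ (π₂ a) b)
        rw [key₁, merge_proj]
      have hg : (g (π₂ a) : Row₁ → ℝ) =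
          ∑ k, u.repr (g (π₂ a)) k • (u k : Row₁ → ℝ) := by
        conv_lhs => rw [← u.sum_repr (g (π₂ a))]
        push_cast [Submodule.coe_sum]
        rfl
      have hck : ∀ k, c k (π₂ a) = ∑ l, v.repr (C k) l • (v l : Row₂ → ℝ) (π₂ a) := by
        intro k
        have hv : (C k : Row₂ → ℝ) = ∑ l, v.repr (C k) l • (v l : Row₂ → ℝ) := by
          conv_lhs => rw [← v.sum_repr (C k)]
          push_cast [Submodule.coe_sum]
          rfl
        have : c k (π₂ a) = (C k : Row₂ → ℝ) (π₂ a) := rfl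
        rw [this, hv, Finset.sum_apply]
        rfl
      rw [hcol, hg, Finset.sum_apply, Finset.sum_apply]
      refine Finset.sum_congr rfl fun k _ => ?_
      rw [Pi.smul_apply, smul_eq_mul, ← hΦ']
      have : (Φ k) ((g (π₂ a)) : Row₁ → ℝ) = c k (π₂ a) := rfl
      rw [this, hck k, Finset.sum_apply, Finset.sum_mul]
      refine Finset.sum_congr rfl fun l _ => ?_
      rw [Pi.smul_apply, smul_eq_mul, smul_eq_mul]
      show v.repr (C k) l * (v l : Row₂ → ℝ) (π₂ a) * (u k : Row₁ → ℝ) (π₁ a) =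
        v.repr (C k) l * ((u k : Row₁ → ℝ) (π₁ a) * (v l : Row₂ → ℝ) (π₂ a))
      ring
    rw [hdecomp]
    exact Submodule.sum_mem _ fun k _ => Submodule.sum_mem _ fun l _ =>
      Submodule.smul_mem _ _ (Submodule.subset_span ⟨(k, l), rfl⟩)
  -- conclude
  have hle : LinearMap.range M.mulVecLin ≤ Submodule.span ℝ (Set.range F) := by
    rw [Matrix.range_mulVecLin, Submodule.span_le]
    rintro w ⟨b, rfl⟩
    exact main b
  have h1 : M.rank ≤ Module.finrank ℝ (Submodule.span ℝ (Set.range F)) :=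
    Submodule.finrank_mono hle
  refine h1.trans ?_
  have h2 : Module.finrank ℝ (Submodule.span ℝ (Set.range F)) ≤
      Fintype.card (Fin (Module.finrank ℝ R₁) × Fin (Module.finrank ℝ R₂)) :=
    finrank_range_le_card F
  refine h2.trans ?_
  rw [hrank₁, hrank₂]
  simp
end

section
/- If an m×n matrix M has rank exactly r, and R, C are index sets of size r such that M|_{R×C} is invertible, then the cross approximation M|_{·×C} (M|_{R×C})^{-1} M|_{R×·} equals M exactly. -/
open Matrix Submodule

/-- Exactness of the skeleton decomposition: if `rank M = r` and the `r×r` pivot block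
`M|_{R×C}` is invertible, then `M|_{·×C} (M|_{R×C})⁻¹ M|_{R×·} = M`. -/
theorem stmt13 (m n r : ℕ) (M : Matrix (Fin m) (Fin n) ℝ)
    (hrank : M.rank = r)
    (R : Fin r → Fin m) (C : Fin r → Fin n)
    (hR : Function.Injective R) (hC : Function.Injective C)
    (hinv : IsUnit (M.submatrix R C).det) :
    M.submatrix id C * (M.submatrix R C)⁻¹ * M.submatrix R id = M := by
  have hAunit : IsUnit (M.submatrix R C) := (isUnit_iff_isUnit_det _).2 hinv
  -- rows of the submatrix are linearly independent
  have hliSub : LinearIndependent ℝ (fun k => (M.submatrix R C) k) :=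
    linearIndependent_rows_iff_isUnit.2 hAunit
  -- hence rows M ∘ R are linearly independent
  set L : (Fin n → ℝ) →ₗ[ℝ] (Fin r → ℝ) := LinearMap.funLeft ℝ ℝ C
  have hli : LinearIndependent ℝ (fun k => M (R k)) := by
    apply LinearIndependent.of_comp L
    convert hliSub
    rfl
  -- span of rows M ∘ R equals span of all rows
  have hle : span ℝ (Set.range (fun k => M (R k))) ≤ span ℝ (Set.range M) :=
    span_mono (Set.range_comp_subset_range R M)
  have hfinT : Module.finrank ℝ (span ℝ (Set.range M)) = r := by
    rw [← hrank, Matrix.rank_eq_finrank_span_row]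
    rfl
  have hfinS : Module.finrank ℝ (span ℝ (Set.range (fun k => M (R k)))) = r := by
    have := linearIndependent_iff_card_eq_finrank_span.mp hli
    simpa [Set.finrank] using this.symm
  have hspan : span ℝ (Set.range (fun k => M (R k))) = span ℝ (Set.range M) :=
    Submodule.eq_of_le_of_finrank_le hle (by rw [hfinT, hfinS])
  -- every row of M is a combination of the selected rows
  have hmem : ∀ i, ∃ c : Fin r → ℝ, ∑ k, c k • M (R k) = M i := by
    intro i
    have : M i ∈ span ℝ (Set.range (fun k => M (R k))) := by
      rw [hspan]; exact subset_span (Set.mem_range_self i)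
    exact (mem_span_range_iff_exists_fun ℝ).1 this
  choose c hc using hmem
  have hfact : M.submatrix id C = Matrix.of c * M.submatrix R C := by
    ext i k'
    have := congrFun (hc i) (C k')
    simpa [Matrix.mul_apply, Finset.sum_apply] using this.symm
  rw [hfact, Matrix.mul_assoc (Matrix.of c), Matrix.mul_nonsing_inv _ hinv, Matrix.mul_one]
  ext i j
  have := congrFun (hc i) j
  simpa [Matrix.mul_apply, Finset.sum_apply] using this
end
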